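/- arXiv:2601.04862 — 2 statements merged into one kernel-verified Lean document; each statement's English description precedes it below -/
import Mathlib

section
/- Let m, n be real numbers and α, β real angles. If the inequality −sin β · (n_j − n) + sin α cos β · (m_j − m) ≤ 0 holds for the four neighbor positions (m_j, n_j) ∈ {(m+1, n), (m−1, n), (m, n+1), (m, n−1)}, then sin β = 0 and sin α cos β = 0, and consequently the outward normal vector satisfies n(α, β) = (cos α cos β, 0, 0)ᵀ with cos α cos β ∈ {1, −1}; i.e., a panel surrounded by neighbors on all four sides must have its normal aligned with the x-axis. -/
open Real Matrix

/-- If the no-mutual-reflection inequality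
−sin β (n_j − n) + sin α cos β (m_j − m) ≤ 0 holds for the four neighbors
(m±1, n) and (m, n±1), then sin β = 0 and sin α cos β = 0, so the outward normal
n(α, β) = (cos α cos β, 0, 0)ᵀ with cos α cos β ∈ {1, −1}. -/
theorem surrounded_panel_normal_aligned (m n α β : ℝ)
    (hup : -Real.sin β * (n - n) + Real.sin α * Real.cos β * ((m + 1) - m) ≤ 0)
    (hdown : -Real.sin β * (n - n) + Real.sin α * Real.cos β * ((m - 1) - m) ≤ 0)
    (hright : -Real.sin β * ((n + 1) - n) + Real.sin α * Real.cos β * (m - m) ≤ 0)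
    (hleft : -Real.sin β * ((n - 1) - n) + Real.sin α * Real.cos β * (m - m) ≤ 0) :
    Real.sin β = 0 ∧ Real.sin α * Real.cos β = 0 ∧
    (![Real.cos α * Real.cos β, -Real.sin β, Real.sin α * Real.cos β] : Fin 3 → ℝ) =
      ![Real.cos α * Real.cos β, 0, 0] ∧
    (Real.cos α * Real.cos β = 1 ∨ Real.cos α * Real.cos β = -1) := by
  have hsb : Real.sin β = 0 := by nlinarith
  have hsc : Real.sin α * Real.cos β = 0 := by nlinarith
  have hcb : Real.cos β = 1 ∨ Real.cos β = -1 := by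
    have := Real.sin_sq_add_cos_sq β
    rw [hsb] at this
    have : Real.cos β ^ 2 = 1 := by nlinarith
    exact sq_eq_one_iff.mp this
  have hsa : Real.sin α = 0 := by
    rcases hcb with h | h <;> rw [h] at hsc <;> nlinarith
  have hca : Real.cos α = 1 ∨ Real.cos α = -1 := by
    have := Real.sin_sq_add_cos_sq α
    rw [hsa] at this
    have : Real.cos α ^ 2 = 1 := by nlinarith
    exact sq_eq_one_iff.mp this
  refine ⟨hsb, hsc, ?_, ?_⟩
  · rw [hsb, hsc]; norm_num
  · rcases hca with h | h <;> rcases hcb with h' | h' <;> rw [h, h'] <;> norm_num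
end

section
/- Let u, e ∈ ℝ³ be unit vectors, let θ = arccos(⟨u, e⟩) be the angle between them, and let θ_max ∈ [0, π/2]. Then the maximum of ⟨f, u⟩ over all unit vectors f ∈ ℝ³ satisfying ⟨f, e⟩ ≥ cos(θ_max) equals cos(max(θ − θ_max, 0)). In particular, if θ ≤ θ_max the antenna boresight f can be aligned exactly with u, and otherwise the minimal achievable eccentric angle between f and u is θ − θ_max. -/
open Real
open scoped RealInnerProductSpace

private lemma arccos_anti {x y : ℝ} (h : x ≤ y) : Real.arccos y ≤ Real.arccos x := by
  simp only [Real.arccos_eq_pi_div_two_sub_arcsin]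
  linarith [Real.monotone_arcsin h]

/-- There is a unit vector `w` orthogonal to `e` with `⟪w, u⟫ = ‖u - ⟪u,e⟫ • e‖`. -/
private lemma exists_unit_orth (u e : EuclideanSpace ℝ (Fin 3)) (hu : ‖u‖ = 1)
    (he : ‖e‖ = 1) :
    ∃ w : EuclideanSpace ℝ (Fin 3), ‖w‖ = 1 ∧ ⟪w, e⟫ = 0 ∧
      ⟪w, u⟫ = ‖u - ⟪u, e⟫ • e‖ := by
  have hee : ⟪e, e⟫ = (1 : ℝ) := by
    rw [real_inner_self_eq_norm_mul_norm, he]; ring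
  have hve : ⟪u - ⟪u, e⟫ • e, e⟫ = 0 := by
    simp only [inner_sub_left, real_inner_smul_left, hee]; ring
  by_cases h0 : u - ⟪u, e⟫ • e = 0
  · -- u is parallel to e; pick any unit vector orthogonal to e
    have hene : e ≠ 0 := by intro h; rw [h] at he; simp at he
    have hbot : ((ℝ ∙ e)ᗮ : Submodule ℝ (EuclideanSpace ℝ (Fin 3))) ≠ ⊥ := by
      intro hb
      have h1 : Module.finrank ℝ (ℝ ∙ e) +
          Module.finrank ℝ ((ℝ ∙ e)ᗮ : Submodule ℝ (EuclideanSpace ℝ (Fin 3))) = 3 := by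
        rw [Submodule.finrank_add_finrank_orthogonal]
        simp [finrank_euclideanSpace]
      rw [hb, finrank_span_singleton hene] at h1
      simp at h1
    obtain ⟨z, hz, hz0⟩ := Submodule.exists_mem_ne_zero_of_ne_bot hbot
    have hze : ⟪z, e⟫ = 0 := by
      have := (Submodule.mem_orthogonal (ℝ ∙ e) z).mp hz e
        (Submodule.mem_span_singleton_self e)
      rwa [real_inner_comm] at this
    refine ⟨‖z‖⁻¹ • z, ?_, ?_, ?_⟩
    · rw [norm_smul, norm_inv, norm_norm, inv_mul_cancel₀ (norm_ne_zero_iff.mpr hz0)]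
    · rw [real_inner_smul_left, hze]; ring
    · have hue : u = ⟪u, e⟫ • e := sub_eq_zero.mp h0
      rw [h0, norm_zero, hue, real_inner_smul_right, real_inner_smul_left, hze]
      ring
  · refine ⟨‖u - ⟪u, e⟫ • e‖⁻¹ • (u - ⟪u, e⟫ • e), ?_, ?_, ?_⟩
    · rw [norm_smul, norm_inv, norm_norm, inv_mul_cancel₀ (norm_ne_zero_iff.mpr h0)]
    · rw [real_inner_smul_left, hve]; ring
    · have hvu : ⟪u - ⟪u, e⟫ • e, u⟫ = ‖u - ⟪u, e⟫ • e‖ ^ 2 := by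
        rw [← real_inner_self_eq_norm_sq]
        simp only [inner_sub_left, inner_sub_right, real_inner_smul_left,
          real_inner_smul_right, hee]
        rw [real_inner_comm e u]
        ring
      rw [real_inner_smul_left, hvu, pow_two,
        inv_mul_cancel_left₀ (norm_ne_zero_iff.mpr h0)]

/-- Under the mechanical rotation bound ⟨f, e⟩ ≥ cos θ_max, the maximal achievable
alignment ⟨f, u⟩ of the unit boresight f with the unit user direction u equals
cos(max(θ − θ_max, 0)), where θ = arccos ⟨u, e⟩. -/
theorem max_alignment_under_rotation_bound
    (u e : EuclideanSpace ℝ (Fin 3)) (hu : ‖u‖ = 1) (he : ‖e‖ = 1)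
    (θmax : ℝ) (hθ₀ : 0 ≤ θmax) (hθ₁ : θmax ≤ π / 2) :
    IsGreatest
      {x : ℝ | ∃ f : EuclideanSpace ℝ (Fin 3),
        ‖f‖ = 1 ∧ Real.cos θmax ≤ ⟪f, e⟫ ∧ x = ⟪f, u⟫}
      (Real.cos (max (Real.arccos ⟪u, e⟫ - θmax) 0)) := by
  have hπ : θmax ≤ π := by linarith [Real.pi_pos]
  have hc1 : |(⟪u, e⟫ : ℝ)| ≤ 1 := by
    have := abs_real_inner_le_norm u e
    rwa [hu, he, one_mul] at this
  have hcl : (-1 : ℝ) ≤ ⟪u, e⟫ := (abs_le.mp hc1).1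
  have hcr : (⟪u, e⟫ : ℝ) ≤ 1 := (abs_le.mp hc1).2
  have hθnn : 0 ≤ Real.arccos ⟪u, e⟫ := Real.arccos_nonneg _
  have hθpi : Real.arccos ⟪u, e⟫ ≤ π := Real.arccos_le_pi _
  have hcosθ : Real.cos (Real.arccos ⟪u, e⟫) = ⟪u, e⟫ := Real.cos_arccos hcl hcr
  have hee : ⟪e, e⟫ = (1 : ℝ) := by
    rw [real_inner_self_eq_norm_mul_norm, he]; ring
  have huu : ⟪u, u⟫ = (1 : ℝ) := by
    rw [real_inner_self_eq_norm_mul_norm, hu]; ring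
  have hcomm : (⟪e, u⟫ : ℝ) = ⟪u, e⟫ := real_inner_comm u e
  constructor
  · -- membership: construct the optimal f
    rcases le_or_gt (Real.arccos ⟪u, e⟫) θmax with hle | hlt
    · -- f = u works
      refine ⟨u, hu, ?_, ?_⟩
      · rw [← hcosθ]
        exact Real.cos_le_cos_of_nonneg_of_le_pi hθnn hπ hle
      · have hm : max (Real.arccos ⟪u, e⟫ - θmax) 0 = 0 := max_eq_right (by linarith)
        rw [hm, Real.cos_zero, huu]
    · -- rotate by θmax towards u
      obtain ⟨w, hw1, hwe, hwu⟩ := exists_unit_orth u e hu he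
      have hs : ‖u - ⟪u, e⟫ • e‖ = Real.sin (Real.arccos ⟪u, e⟫) := by
        have h2 : ‖u - ⟪u, e⟫ • e‖ ^ 2 = 1 - ⟪u, e⟫ ^ 2 := by
          rw [← real_inner_self_eq_norm_sq]
          simp only [inner_sub_left, inner_sub_right, real_inner_smul_left,
            real_inner_smul_right, hee, huu, hcomm]
          ring
        rw [Real.sin_arccos, ← h2, Real.sqrt_sq (norm_nonneg _)]
      have hew : ⟪e, w⟫ = (0 : ℝ) := by rw [real_inner_comm]; exact hwe
      have hww : ⟪w, w⟫ = (1 : ℝ) := by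
        rw [real_inner_self_eq_norm_mul_norm, hw1]; ring
      refine ⟨Real.cos θmax • e + Real.sin θmax • w, ?_, ?_, ?_⟩
      · have h2 : ‖Real.cos θmax • e + Real.sin θmax • w‖ ^ 2 = 1 := by
          rw [← real_inner_self_eq_norm_sq]
          simp only [inner_add_left, inner_add_right, real_inner_smul_left,
            real_inner_smul_right, hee, hwe, hew, hww]
          nlinarith [Real.sin_sq_add_cos_sq θmax]
        nlinarith [norm_nonneg (Real.cos θmax • e + Real.sin θmax • w)]
      · simp only [inner_add_left, real_inner_smul_left, hee, hwe]
        linarith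

      · have hm : max (Real.arccos ⟪u, e⟫ - θmax) 0 = Real.arccos ⟪u, e⟫ - θmax :=
          max_eq_left (by linarith)
        rw [hm, Real.cos_sub, hcosθ]
        simp only [inner_add_left, real_inner_smul_left, hcomm, hwu, hs]
        ring
  · -- upper bound
    rintro x ⟨f, hfn, hfe, rfl⟩
    have ha1 : |(⟪f, e⟫ : ℝ)| ≤ 1 := by
      have := abs_real_inner_le_norm f e
      rwa [hfn, he, one_mul] at this
    have hal : (-1 : ℝ) ≤ ⟪f, e⟫ := (abs_le.mp ha1).1
    have har : (⟪f, e⟫ : ℝ) ≤ 1 := (abs_le.mp ha1).2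
    have hαnn : 0 ≤ Real.arccos ⟪f, e⟫ := Real.arccos_nonneg _
    have hαmax : Real.arccos ⟪f, e⟫ ≤ θmax := by
      have := arccos_anti hfe
      rwa [Real.arccos_cos hθ₀ hπ] at this
    have hff : ⟪f, f⟫ = (1 : ℝ) := by
      rw [real_inner_self_eq_norm_mul_norm, hfn]; ring
    have hcommf : (⟪e, f⟫ : ℝ) = ⟪f, e⟫ := real_inner_comm f e
    -- key inequality via Cauchy-Schwarz on components orthogonal to e
    have hkey : (⟪f, u⟫ : ℝ) ≤
        Real.cos (Real.arccos ⟪f, e⟫) * Real.cos (Real.arccos ⟪u, e⟫) +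
        Real.sin (Real.arccos ⟪f, e⟫) * Real.sin (Real.arccos ⟪u, e⟫) := by
      have h1 : ⟪f - ⟪f, e⟫ • e, u - ⟪u, e⟫ • e⟫ = ⟪f, u⟫ - ⟪f, e⟫ * ⟪u, e⟫ := by
        simp only [inner_sub_left, inner_sub_right, real_inner_smul_left,
          real_inner_smul_right, hee, hcomm, hcommf]
        ring
      have hnf : ‖f - ⟪f, e⟫ • e‖ = Real.sqrt (1 - ⟪f, e⟫ ^ 2) := by
        have h2 : ‖f - ⟪f, e⟫ • e‖ ^ 2 = 1 - ⟪f, e⟫ ^ 2 := by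
          rw [← real_inner_self_eq_norm_sq]
          simp only [inner_sub_left, inner_sub_right, real_inner_smul_left,
            real_inner_smul_right, hee, hff, hcommf]
          ring
        rw [← h2, Real.sqrt_sq (norm_nonneg _)]
      have hnu : ‖u - ⟪u, e⟫ • e‖ = Real.sqrt (1 - ⟪u, e⟫ ^ 2) := by
        have h2 : ‖u - ⟪u, e⟫ • e‖ ^ 2 = 1 - ⟪u, e⟫ ^ 2 := by
          rw [← real_inner_self_eq_norm_sq]
          simp only [inner_sub_left, inner_sub_right, real_inner_smul_left,
            real_inner_smul_right, hee, huu, hcomm]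
          ring
        rw [← h2, Real.sqrt_sq (norm_nonneg _)]
      have hcs := real_inner_le_norm (f - ⟪f, e⟫ • e) (u - ⟪u, e⟫ • e)
      rw [h1, hnf, hnu] at hcs
      rw [Real.cos_arccos hal har, Real.cos_arccos hcl hcr,
        Real.sin_arccos, Real.sin_arccos]
      linarith
    rw [← Real.cos_sub] at hkey
    have hflip : Real.cos (Real.arccos ⟪f, e⟫ - Real.arccos ⟪u, e⟫)
        = Real.cos (Real.arccos ⟪u, e⟫ - Real.arccos ⟪f, e⟫) := by
      rw [← Real.cos_neg, neg_sub]
    rw [hflip] at hkey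
    rcases le_or_gt θmax (Real.arccos ⟪u, e⟫) with hle | hlt
    · have hm : max (Real.arccos ⟪u, e⟫ - θmax) 0 = Real.arccos ⟪u, e⟫ - θmax :=
        max_eq_left (by linarith)
      rw [hm]
      have : Real.cos (Real.arccos ⟪u, e⟫ - Real.arccos ⟪f, e⟫)
          ≤ Real.cos (Real.arccos ⟪u, e⟫ - θmax) :=
        Real.cos_le_cos_of_nonneg_of_le_pi (by linarith) (by linarith) (by linarith)
      linarith
    · have hm : max (Real.arccos ⟪u, e⟫ - θmax) 0 = 0 := max_eq_right (by linarith)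
      rw [hm, Real.cos_zero]
      linarith [Real.cos_le_one (Real.arccos ⟪u, e⟫ - Real.arccos ⟪f, e⟫)]
end
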